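/- arXiv:2009.08089 — 2 statements merged into one kernel-verified Lean document; each statement's English description precedes it below -/
import Mathlib

section
/- Let α ∈ (0,1], let A ∈ ℝ^{m×n} with m ≥ n be a random matrix satisfying Assumption 1 (with parameter K), and suppose A x* = b for some x* ∈ ℝⁿ (the linear system is consistent). Then there exists a constant C_K > 0 depending only on K such that with probability at least 1 − 2·exp(−m), simultaneously for every x ∈ ℝⁿ, the bound |⟨a_i, x⟩ − b_i| ≤ (C_K/(α√n))·‖x − x*‖ holds for all but at most αm indices i ∈ [m]. -/
/-!
Fix a `1/2`-net `N` of the unit sphere with `#N ≤ 5ⁿ ≤ 5ᵐ`. For `u ∈ N` the variables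
`√n ⟨aᵢ, u⟩` are independent and sub-Gaussian with constant `K`, so each
`exp ((√n ⟨aᵢ, u⟩)² / (K+1)²)` has mean at most `2`, and Chernoff's bound gives
`P (∑ᵢ (√n ⟨aᵢ, u⟩)² ≥ (K+1)² (1 + log 10) m) ≤ e^{-(1 + log 10) m} 2ᵐ`; the union bound over `N`
brings the failure probability down to `e^{-m}`. Off this event the net argument bounds the operator
norm of `x ↦ (⟨aᵢ, x⟩)ᵢ` by `2 (K+1) √((1 + log 10) m / n)`, and counting the rows with
`|⟨aᵢ, x - x*⟩| > C_K / (α √n) ‖x - x*‖` against `∑ᵢ ⟨aᵢ, x - x*⟩²` leaves at most `α² m ≤ α m`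
of them, for `C_K = 2 (K+1) √(1 + log 10)`.
-/

open MeasureTheory ProbabilityTheory Finset
open scoped RealInnerProductSpace ENNReal NNReal BigOperators

noncomputable section

/-- The sub-Gaussian norm `‖X‖_{ψ₂} = inf {t > 0 : E exp(X²/t²) ≤ 2}` of a real random
variable `X` on `(Ω, μ)`. -/
def subgNorm {Ω : Type*} [MeasurableSpace Ω] (μ : Measure Ω) (X : Ω → ℝ) : ℝ :=
  sInf {t : ℝ | 0 < t ∧ ∫ ω, Real.exp (X ω ^ 2 / t ^ 2) ∂μ ≤ 2}

/-- Assumption 1: the rows `a_i = A ω i` of the random matrix `A` are independent unit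
vectors, and each rescaled row `√n • a_i` is mean zero, isotropic and has sub-Gaussian
norm at most `K` (i.e. `‖⟨√n • a_i, x⟩‖_{ψ₂} ≤ K` for every unit vector `x`). -/
structure Assumption1 {Ω : Type*} [MeasurableSpace Ω] (μ : Measure Ω)
    {m n : ℕ} (A : Ω → Fin m → EuclideanSpace ℝ (Fin n)) (K : ℝ) : Prop where
  measurableRows : ∀ i, Measurable fun ω => A ω i
  unitNorm : ∀ᵐ ω ∂μ, ∀ i, ‖A ω i‖ = 1
  indepRows : iIndepFun (fun i ω => A ω i) μ
  meanZero : ∀ i j, ∫ ω, Real.sqrt n * A ω i j ∂μ = 0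
  isotropic : ∀ i j k, ∫ ω, (Real.sqrt n * A ω i j) * (Real.sqrt n * A ω i k) ∂μ
      = if j = k then 1 else 0
  subgaussian : ∀ i, ∀ x : EuclideanSpace ℝ (Fin n), ‖x‖ = 1 →
      subgNorm μ (fun ω => ⟪Real.sqrt n • A ω i, x⟫) ≤ K

/-- Assumption 2: each entry `a_{ij} = A ω i j` of the random matrix has a probability
density function bounded pointwise by `D √n`. -/
def Assumption2 {Ω : Type*} [MeasurableSpace Ω] (μ : Measure Ω)
    {m n : ℕ} (A : Ω → Fin m → EuclideanSpace ℝ (Fin n)) (D : ℝ) : Prop :=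
  ∀ i j, ∃ φ : ℝ → ℝ≥0∞,
    Measure.map (fun ω => A ω i j) μ = MeasureTheory.volume.withDensity φ ∧
    ∀ t : ℝ, φ t ≤ ENNReal.ofReal (D * Real.sqrt n)

/-- The `q`-quantile of the multiset `{r 0, …, r (m-1)}`: its `⌊q·m⌋`-th smallest element
(1-indexed). -/
def quantile {m : ℕ} (q : ℝ) (r : Fin m → ℝ) : ℝ :=
  (Multiset.sort (Multiset.map r Finset.univ.val) (· ≤ ·)).getD (⌊q * (m : ℝ)⌋.toNat - 1) 0

/-- `sgn s = 1` if `s > 0` and `-1` otherwise. -/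
def sgn (s : ℝ) : ℝ := if 0 < s then 1 else -1

/-- The optimal SGD step size `η*(x) = (1/m) ∑ᵢ sgn(⟨aᵢ,x⟩ - bᵢ)·⟨x - x*, aᵢ⟩`. -/
def etaStar {m n : ℕ} (a : Fin m → EuclideanSpace ℝ (Fin n)) (b : Fin m → ℝ)
    (xstar x : EuclideanSpace ℝ (Fin n)) : ℝ :=
  (1 / m) * ∑ i, sgn (⟪a i, x⟫ - b i) * ⟪x - xstar, a i⟫

open Metric

section Net

variable {E : Type*} [NormedAddCommGroup E] [NormedSpace ℝ E] [FiniteDimensional ℝ E]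
  [MeasurableSpace E] [BorelSpace E]

theorem card_le_of_isSeparated_of_subset_closedBall {s : Finset E} {ε : ℝ≥0} (hε : 0 < ε)
    (hs : (s : Set E) ⊆ closedBall 0 1) (hsep : IsSeparated ε (s : Set E)) :
    (s.card : ℝ) ≤ (1 + 2 / ε) ^ Module.finrank ℝ E := by
  let μ : Measure E := Measure.addHaar
  set r : ℝ := ε / 2 with hr_def
  have hr : 0 < r := by positivity
  have hvol : ∀ x : E, ∀ ρ : ℝ, 0 < ρ →
      μ.real (ball x ρ) = ρ ^ Module.finrank ℝ E * μ.real (ball 0 1) := by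
    intro x ρ hρ
    simp [measureReal_def, Measure.addHaar_ball_of_pos μ x hρ, ENNReal.toReal_mul,
      hρ.le]
  have hdisj : (s : Set E).PairwiseDisjoint (fun u => ball u r) := by
    intro u hu v hv huv
    refine ball_disjoint_ball ?_
    have hlt : (ε : ℝ≥0∞) < edist u v := hsep hu hv huv
    rw [edist_dist, ← ENNReal.ofReal_coe_nnreal,
      ENNReal.ofReal_lt_ofReal_iff_of_nonneg ε.coe_nonneg] at hlt
    linarith
  have hsub : (⋃ u ∈ s, ball u r) ⊆ ball 0 (1 + r) := by
    simp only [Set.iUnion_subset_iff]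
    intro u hu
    exact ball_subset_ball' (by linarith [mem_closedBall_zero_iff.1 (hs hu), dist_zero_right u])
  have hpack : (s.card : ℝ) * (r ^ Module.finrank ℝ E * μ.real (ball 0 1))
      ≤ (1 + r) ^ Module.finrank ℝ E * μ.real (ball 0 1) := by
    calc (s.card : ℝ) * (r ^ Module.finrank ℝ E * μ.real (ball 0 1))
        = μ.real (⋃ u ∈ s, ball u r) := by
          rw [measureReal_biUnion_finset hdisj fun u _ => measurableSet_ball]
          simp [hvol _ _ hr]
      _ ≤ μ.real (ball 0 (1 + r)) := measureReal_mono hsub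
      _ = _ := hvol _ _ (by positivity)
  have hB : 0 < μ.real (ball (0 : E) 1) :=
    ENNReal.toReal_pos (measure_ball_pos μ _ one_pos).ne' measure_ball_lt_top.ne
  have : (1 + 2 / (ε : ℝ)) = (1 + r) / r := by field_simp; ring
  rw [this, div_pow, le_div_iff₀ (by positivity)]
  nlinarith

theorem packingNumber_ne_top_of_subset_closedBall {A : Set E} (hA : A ⊆ closedBall 0 1)
    {ε : ℝ≥0} (hε : 0 < ε) : packingNumber ε A ≠ ⊤ := by
  refine ne_top_of_le_ne_top (ENat.natCast_ne_top ⌊(1 + 2 / (ε : ℝ)) ^ Module.finrank ℝ E⌋₊) ?_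
  refine iSup₂_le fun C hCA => iSup_le fun hC => ?_
  by_contra! hlt
  obtain ⟨t, htC, ht⟩ := Set.exists_subset_encard_eq (Order.add_one_le_of_lt hlt)
  have htfin : t.Finite := Set.finite_of_encard_eq_coe ht
  have hcard := card_le_of_isSeparated_of_subset_closedBall hε (s := htfin.toFinset)
    (by simpa using htC.trans (hCA.trans hA)) (by simpa using hC.subset htC)
  rw [htfin.encard_eq_coe_toFinset_card] at ht
  norm_cast at ht
  rw [ht] at hcard
  push_cast at hcard
  linarith [Nat.lt_floor_add_one ((1 + 2 / (ε : ℝ)) ^ Module.finrank ℝ E)]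

theorem exists_finset_isCover_sphere {ε : ℝ≥0} (hε : 0 < ε) :
    ∃ N : Finset E, (N : Set E) ⊆ sphere 0 1 ∧
      (N.card : ℝ) ≤ (1 + 2 / ε) ^ Module.finrank ℝ E ∧
      IsCover ε (sphere (0 : E) 1) (N : Set E) := by
  have hfin :=
    packingNumber_ne_top_of_subset_closedBall (sphere_subset_closedBall (x := (0 : E))) hε
  have hS : (maximalSeparatedSet ε (sphere (0 : E) 1)).Finite := by
    rw [← Set.encard_ne_top_iff, encard_maximalSeparatedSet hfin]
    exact hfin
  refine ⟨hS.toFinset, by simpa using maximalSeparatedSet_subset, ?_, by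
    simpa using isCover_maximalSeparatedSet hfin⟩
  exact card_le_of_isSeparated_of_subset_closedBall hε
    (by simpa using maximalSeparatedSet_subset.trans sphere_subset_closedBall)
    (by simpa using isSeparated_maximalSeparatedSet)

end Net

section OpNorm

variable {E F : Type*} [NormedAddCommGroup E] [NormedSpace ℝ E] [NormedAddCommGroup F]
  [NormedSpace ℝ F]

theorem opNorm_le_of_isCover_sphere (G : E →L[ℝ] F) {N : Set E} {ε : ℝ≥0} (hε : ε < 1)
    (hN : IsCover ε (sphere 0 1) N) {M : ℝ} (hM : 0 ≤ M) (hGN : ∀ u ∈ N, ‖G u‖ ≤ M) :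
    ‖G‖ ≤ M / (1 - ε) := by
  have hε' : (ε : ℝ) < 1 := by exact_mod_cast hε
  suffices ‖G‖ ≤ M + ε * ‖G‖ by
    rw [le_div_iff₀ (by linarith)]
    linarith
  refine G.opNorm_le_of_unit_norm (by positivity) fun x hx => ?_
  obtain ⟨u, hu, hxu⟩ := Set.mem_iUnion₂.1
    (isCover_iff_subset_iUnion_closedBall.1 hN (mem_sphere_zero_iff_norm.2 hx))
  rw [mem_closedBall, dist_eq_norm] at hxu
  calc ‖G x‖ ≤ ‖G u‖ + ‖G (x - u)‖ := by
        simpa using norm_add_le (G u) (G (x - u))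
    _ ≤ M + ‖G‖ * ε := add_le_add (hGN u hu) (G.le_of_opNorm_le le_rfl _ |>.trans
        (mul_le_mul_of_nonneg_left hxu (norm_nonneg _)))
    _ = M + ε * ‖G‖ := by ring

end OpNorm

section Rows

variable {ι E : Type*} [Fintype ι] [NormedAddCommGroup E] [InnerProductSpace ℝ E]

def rowsCLM (a : ι → E) : E →L[ℝ] EuclideanSpace ℝ ι :=
  (EuclideanSpace.equiv ι ℝ).symm.toContinuousLinearMap.comp
    (ContinuousLinearMap.pi fun i => innerSL ℝ (a i))

theorem norm_rowsCLM_apply_sq (a : ι → E) (x : E) :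
    ‖rowsCLM a x‖ ^ 2 = ∑ i, ⟪a i, x⟫ ^ 2 := by
  simp [rowsCLM, EuclideanSpace.norm_sq_eq]

omit [Fintype ι] in
theorem card_filter_lt_abs_mul_sq_le (s : Finset ι) (y : ι → ℝ) {t : ℝ} (ht : 0 ≤ t) :
    (#{i ∈ s | t < |y i|} : ℝ) * t ^ 2 ≤ ∑ i ∈ s, y i ^ 2 := by
  calc (#{i ∈ s | t < |y i|} : ℝ) * t ^ 2 = #{i ∈ s | t < |y i|} • t ^ 2 := by
        rw [nsmul_eq_mul]
    _ ≤ ∑ i ∈ s with t < |y i|, y i ^ 2 := Finset.card_nsmul_le_sum _ _ _ fun i hi => by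
        simpa only [sq_abs] using pow_le_pow_left₀ ht (Finset.mem_filter.1 hi).2.le 2
    _ ≤ ∑ i ∈ s, y i ^ 2 :=
        Finset.sum_le_sum_of_subset_of_nonneg (Finset.filter_subset _ _) fun _ _ _ => sq_nonneg _

theorem card_filter_not_abs_inner_le_le (a : ι → E) {B t : ℝ} (ht : 0 < t)
    (hB : ‖rowsCLM a‖ ≤ B) (v : E) :
    (#{i | ¬ |⟪a i, v⟫| ≤ t * ‖v‖} : ℝ) ≤ B ^ 2 / t ^ 2 := by
  rcases eq_or_ne v 0 with rfl | hv
  · simpa using div_nonneg (sq_nonneg B) (sq_nonneg t)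
  have hv' : 0 < ‖v‖ := norm_pos_iff.2 hv
  have hcount := card_filter_lt_abs_mul_sq_le Finset.univ (fun i => ⟪a i, v⟫)
    (by positivity : 0 ≤ t * ‖v‖)
  rw [← norm_rowsCLM_apply_sq] at hcount
  have hGv : ‖rowsCLM a v‖ ^ 2 ≤ (B * ‖v‖) ^ 2 :=
    pow_le_pow_left₀ (norm_nonneg _) ((rowsCLM a).le_of_opNorm_le hB v) 2
  simp only [not_le]
  rw [le_div_iff₀ (by positivity)]
  refine le_of_mul_le_mul_right ?_ (by positivity : 0 < ‖v‖ ^ 2)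
  simpa only [mul_pow, mul_assoc] using hcount.trans hGv

theorem norm_rowsCLM_le_of_isCover (a : ι → E) {N : Set E} {ε : ℝ≥0} (hε : ε < 1)
    (hN : IsCover ε (sphere 0 1) N) {M : ℝ} (hM : 0 ≤ M)
    (haN : ∀ u ∈ N, ∑ i, ⟪a i, u⟫ ^ 2 ≤ M ^ 2) :
    ‖rowsCLM a‖ ≤ M / (1 - ε) :=
  opNorm_le_of_isCover_sphere _ hε hN hM fun u hu =>
    (pow_le_pow_iff_left₀ (norm_nonneg _) hM two_ne_zero).1 <|
      (norm_rowsCLM_apply_sq a u).trans_le (haN u hu)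

theorem card_filter_not_abs_inner_le_le_of_isCover (a : ι → E) {N : Set E}
    (hN : IsCover (1 / 2) (sphere 0 1) N) {c R : ℝ} (hc : 0 < c) (hR : 0 < R)
    (haN : ∀ u ∈ N, ∑ i, (c * ⟪a i, u⟫) ^ 2 ≤ R ^ 2 * Fintype.card ι) {α : ℝ} (hα : 0 < α)
    (v : E) :
    (#{i | ¬ |⟪a i, v⟫| ≤ 2 * R / (α * c) * ‖v‖} : ℝ) ≤ α ^ 2 * Fintype.card ι := by
  set M := R * Real.sqrt (Fintype.card ι) / c
  have hM : ‖rowsCLM a‖ ≤ 2 * M := by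
    refine (norm_rowsCLM_le_of_isCover a (M := M) (by norm_num) hN (by positivity)
      fun u hu => ?_).trans_eq (by norm_num; ring)
    have h := haN u hu
    simp only [mul_pow, ← Finset.mul_sum] at h
    rw [div_pow, mul_pow, Real.sq_sqrt (Nat.cast_nonneg _), le_div_iff₀ (by positivity)]
    linarith
  refine (card_filter_not_abs_inner_le_le a (by positivity) hM v).trans_eq ?_
  simp only [M, div_pow, mul_pow, Real.sq_sqrt (Nat.cast_nonneg _)]
  field_simp

end Rows

section SubGaussian

variable {Ω : Type*} [MeasurableSpace Ω] {μ : Measure Ω} [IsProbabilityMeasure μ]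
  {f : Ω → ℝ} {c : ℝ}

theorem integrable_exp_sq_div_sq (hf : AEMeasurable f μ) (hc : ∀ᵐ ω ∂μ, f ω ^ 2 ≤ c) (t : ℝ) :
    Integrable (fun ω => Real.exp (f ω ^ 2 / t ^ 2)) μ := by
  simpa only [div_eq_inv_mul] using
    integrable_exp_mul_of_le (t ^ 2)⁻¹ c (by positivity) (hf.pow_const 2) hc

theorem exists_integral_exp_sq_div_sq_le_two (hf : AEMeasurable f μ)
    (hc : ∀ᵐ ω ∂μ, f ω ^ 2 ≤ c) :
    ∃ t, 0 < t ∧ ∫ ω, Real.exp (f ω ^ 2 / t ^ 2) ∂μ ≤ 2 := by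
  obtain ⟨ω₀, hω₀⟩ := hc.exists
  have hc0 : 0 ≤ c := (sq_nonneg _).trans hω₀
  have hlog2 : 0 < Real.log 2 := Real.log_pos one_lt_two
  set t := Real.sqrt ((c + 1) / Real.log 2)
  have ht2 : t ^ 2 = (c + 1) / Real.log 2 := Real.sq_sqrt (by positivity)
  refine ⟨t, Real.sqrt_pos.2 (by positivity), ?_⟩
  calc ∫ ω, Real.exp (f ω ^ 2 / t ^ 2) ∂μ ≤ ∫ _ω, (2 : ℝ) ∂μ := by
        refine integral_mono_ae (integrable_exp_sq_div_sq hf hc t) (integrable_const _) ?_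
        filter_upwards [hc] with ω hω
        -- `f ω ^ 2 / t ^ 2 ≤ c * log 2 / (c + 1) ≤ log 2`
        rw [← Real.exp_log two_pos, Real.exp_le_exp, ht2, div_div_eq_mul_div,
          div_le_iff₀ (by positivity)]
        nlinarith
    _ = 2 := by simp

theorem mgf_sq_le_two_of_subgNorm_lt (hf : AEMeasurable f μ) (hc : ∀ᵐ ω ∂μ, f ω ^ 2 ≤ c)
    {s : ℝ} (hs : subgNorm μ f < s) :
    mgf (fun ω => f ω ^ 2) μ (s ^ 2)⁻¹ ≤ 2 := by
  obtain ⟨t, ⟨ht0, ht⟩, hts⟩ := (csInf_lt_iff ⟨0, fun _ ht => ht.1.le⟩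
    (exists_integral_exp_sq_div_sq_le_two hf hc)).1 hs
  set θ := t ^ 2 / s ^ 2
  have hθ0 : 0 ≤ θ := by positivity
  have hθ1 : θ ≤ 1 := div_le_one_of_le₀ (pow_le_pow_left₀ ht0.le hts.le 2) (sq_nonneg s)
  -- `exp (f² / s²) = exp (θ · f² / t² + (1 - θ) · 0)`: convexity passes the bound from `t` to `s`
  have hconv : ∀ ω, Real.exp ((s ^ 2)⁻¹ * f ω ^ 2)
      ≤ θ * Real.exp (f ω ^ 2 / t ^ 2) + (1 - θ) := by
    intro ω
    have h := convexOn_exp.2 (Set.mem_univ (f ω ^ 2 / t ^ 2)) (Set.mem_univ 0) hθ0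
      (sub_nonneg.2 hθ1) (add_sub_cancel θ 1)
    have hθt : θ * (f ω ^ 2 / t ^ 2) = (s ^ 2)⁻¹ * f ω ^ 2 := by
      simp only [θ]; field_simp
    simpa [hθt] using h
  have hint := integrable_exp_sq_div_sq hf hc t
  calc mgf (fun ω => f ω ^ 2) μ (s ^ 2)⁻¹
      ≤ ∫ ω, (θ * Real.exp (f ω ^ 2 / t ^ 2) + (1 - θ)) ∂μ :=
        integral_mono_of_nonneg (ae_of_all _ fun _ => (Real.exp_pos _).le)
          ((hint.const_mul θ).add (integrable_const _)) (ae_of_all _ hconv)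
    _ = θ * ∫ ω, Real.exp (f ω ^ 2 / t ^ 2) ∂μ + (1 - θ) := by
        rw [integral_add (hint.const_mul θ) (integrable_const _), integral_const_mul]
        simp
    _ ≤ 2 := by nlinarith

end SubGaussian

section Probability

variable {Ω : Type*} [MeasurableSpace Ω] {μ : Measure Ω} [IsProbabilityMeasure μ]

theorem ofReal_one_sub_le_of_measureReal_compl_le {s : Set Ω} {δ : ℝ} (h : μ.real sᶜ ≤ δ) :
    ENNReal.ofReal (1 - δ) ≤ μ s := by
  have hunion := measureReal_union_le (μ := μ) s sᶜ
  rw [Set.union_compl_self, probReal_univ] at hunion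
  rw [← ofReal_measureReal]
  exact ENNReal.ofReal_le_ofReal (by linarith)

theorem ProbabilityTheory.iIndepFun.measureReal_sum_ge_le_of_mgf_le {ι : Type*} [Fintype ι]
    {X : ι → Ω → ℝ} (hindep : iIndepFun X μ) (hmeas : ∀ i, Measurable (X i)) {t M : ℝ}
    (ht : 0 ≤ t) (hint : ∀ i, Integrable (fun ω => Real.exp (t * X i ω)) μ)
    (hM : ∀ i, mgf (X i) μ t ≤ M) (ε : ℝ) :
    μ.real {ω | ε ≤ ∑ i, X i ω} ≤ Real.exp (-t * ε) * M ^ Fintype.card ι := by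
  calc μ.real {ω | ε ≤ ∑ i, X i ω}
      ≤ Real.exp (-t * ε) * mgf (∑ i, X i) μ t := by
        simpa only [Finset.sum_apply] using measure_ge_le_exp_mul_mgf ε ht
          (hindep.integrable_exp_mul_sum hmeas fun i _ => hint i)
    _ ≤ Real.exp (-t * ε) * M ^ Fintype.card ι := by
        rw [hindep.mgf_sum hmeas, ← Finset.card_univ, ← Finset.prod_const]
        exact mul_le_mul_of_nonneg_left
          (Finset.prod_le_prod (fun _ _ => mgf_nonneg) fun i _ => hM i) (Real.exp_pos _).le

end Probability

namespace Assumption1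

variable {Ω : Type*} [MeasurableSpace Ω] {μ : Measure Ω} [IsProbabilityMeasure μ] {m n : ℕ}
  {A : Ω → Fin m → EuclideanSpace ℝ (Fin n)} {K : ℝ}

theorem measureReal_sum_sq_inner_ge_le (hA : Assumption1 μ A K) {u : EuclideanSpace ℝ (Fin n)}
    (hu : ‖u‖ = 1) (hK : 0 ≤ K) {s : ℝ} (hKs : K < s) (r : ℝ) :
    μ.real {ω | s ^ 2 * r ≤ ∑ i, (Real.sqrt n * ⟪A ω i, u⟫) ^ 2} ≤ Real.exp (-r) * 2 ^ m := by
  set g : EuclideanSpace ℝ (Fin n) → ℝ := fun v => Real.sqrt n * ⟪v, u⟫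
  have hg : Measurable g := by fun_prop
  have hmeas : ∀ i, Measurable fun ω => g (A ω i) ^ 2 :=
    fun i => (hg.comp (hA.measurableRows i)).pow_const 2
  have hbdd : ∀ i, ∀ᵐ ω ∂μ, g (A ω i) ^ 2 ≤ n := by
    intro i
    filter_upwards [hA.unitNorm] with ω hω
    have h1 : ⟪A ω i, u⟫ ^ 2 ≤ 1 := by
      simpa [hω i, hu] using sq_le_sq' (neg_le_of_abs_le (abs_real_inner_le_norm (A ω i) u))
        (le_of_abs_le (abs_real_inner_le_norm (A ω i) u))
    simp only [g, mul_pow, Real.sq_sqrt n.cast_nonneg]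
    nlinarith [n.cast_nonneg (α := ℝ)]
  have hs : 0 < s := hK.trans_lt hKs
  have hmgf : ∀ i, mgf (fun ω => g (A ω i) ^ 2) μ (s ^ 2)⁻¹ ≤ 2 := by
    intro i
    refine mgf_sq_le_two_of_subgNorm_lt (hg.comp (hA.measurableRows i)).aemeasurable (hbdd i)
      ((le_of_eq ?_).trans_lt ((hA.subgaussian i u hu).trans_lt hKs))
    simp only [g, Function.comp_def, real_inner_smul_left]
  have h := (hA.indepRows.comp (fun _ v => g v ^ 2) fun _ => hg.pow_const 2)
    |>.measureReal_sum_ge_le_of_mgf_le hmeas (by positivity)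
      (fun i => integrable_exp_mul_of_le _ _ (by positivity) (hmeas i).aemeasurable (hbdd i))
      hmgf (s ^ 2 * r)
  rwa [Fintype.card_fin, neg_mul, inv_mul_cancel_left₀ (by positivity)] at h

theorem measureReal_exists_sum_sq_inner_ge_le (hA : Assumption1 μ A K) (hK : 0 ≤ K)
    {N : Finset (EuclideanSpace ℝ (Fin n))} (hN : ∀ u ∈ N, ‖u‖ = 1) {s : ℝ} (hKs : K < s)
    (r : ℝ) :
    μ.real {ω | ∃ u ∈ N, s ^ 2 * r ≤ ∑ i, (Real.sqrt n * ⟪A ω i, u⟫) ^ 2}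
      ≤ N.card * (Real.exp (-r) * 2 ^ m) := by
  have hset : {ω | ∃ u ∈ N, s ^ 2 * r ≤ ∑ i, (Real.sqrt n * ⟪A ω i, u⟫) ^ 2}
      = ⋃ u ∈ N, {ω | s ^ 2 * r ≤ ∑ i, (Real.sqrt n * ⟪A ω i, u⟫) ^ 2} := by
    ext; simp
  rw [hset, ← nsmul_eq_mul, ← Finset.sum_const]
  exact (measureReal_biUnion_finset_le _ _).trans <| Finset.sum_le_sum fun u hu =>
    hA.measureReal_sum_sq_inner_ge_le (hN u hu) hK hKs r

theorem measureReal_exists_sum_sq_inner_ge_le_exp_neg (hA : Assumption1 μ A K) (hK : 0 ≤ K)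
    (hnm : n ≤ m) {N : Finset (EuclideanSpace ℝ (Fin n))} (hN : ∀ u ∈ N, ‖u‖ = 1)
    (hNcard : (N.card : ℝ) ≤ 5 ^ n) :
    μ.real {ω | ∃ u ∈ N, (K + 1) ^ 2 * ((1 + Real.log 10) * m)
      ≤ ∑ i, (Real.sqrt n * ⟪A ω i, u⟫) ^ 2} ≤ Real.exp (-m) := by
  refine (hA.measureReal_exists_sum_sq_inner_ge_le hK hN (lt_add_one K) _).trans ?_
  calc (N.card : ℝ) * (Real.exp (-((1 + Real.log 10) * m)) * 2 ^ m)
      ≤ 5 ^ m * (Real.exp (-((1 + Real.log 10) * m)) * 2 ^ m) := by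
        gcongr
        exact hNcard.trans (pow_le_pow_right₀ (by norm_num) hnm)
    _ = Real.exp (-((1 + Real.log 10) * m)) * Real.exp (m * Real.log 10) := by
        rw [Real.exp_nat_mul, Real.exp_log (by norm_num), show (10 : ℝ) = 5 * 2 by norm_num,
          mul_pow]
        ring
    _ = Real.exp (-m) := by
        rw [← Real.exp_add]
        ring_nf

end Assumption1

/-- (Corollary `med_cor`). For a consistent system `b = A x*` with `A` a
random matrix with `m ≥ n` satisfying Assumption 1 and `α ∈ (0,1]`, with probability at
least `1 - 2exp(-m)`, simultaneously for every `x ∈ ℝⁿ`, the bound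
`|⟨aᵢ,x⟩ - bᵢ| ≤ (C_K/(α√n))·‖x - x*‖` holds for all but at most `αm` indices `i`. -/
theorem med_cor :
    ∀ K : ℝ, 0 < K →
    ∃ CK : ℝ, 0 < CK ∧
    ∀ (α : ℝ), 0 < α → α ≤ 1 →
    ∀ (Ω : Type) (_ : MeasurableSpace Ω) (μ : Measure Ω), IsProbabilityMeasure μ →
    ∀ (m n : ℕ), 0 < n → n ≤ m →
    ∀ A : Ω → Fin m → EuclideanSpace ℝ (Fin n), Assumption1 μ A K →
    ∀ xstar : EuclideanSpace ℝ (Fin n),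
    ENNReal.ofReal (1 - 2 * Real.exp (-(m : ℝ))) ≤
      μ {ω | ∀ x : EuclideanSpace ℝ (Fin n),
          ((Finset.univ.filter fun i =>
              ¬ |⟪A ω i, x⟫ - ⟪A ω i, xstar⟫| ≤
                CK / (α * Real.sqrt n) * ‖x - xstar‖).card : ℝ) ≤ α * m} := by
  intro K hK
  set R := (K + 1) * Real.sqrt (1 + Real.log 10)
  have hR : 0 < R := by positivity
  refine ⟨2 * R, by positivity, ?_⟩
  intro α hα0 hα1 Ω _ μ _ m n hn hnm A hA xstar
  obtain ⟨N, hNsphere, hNcard, hNcover⟩ :=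
    exists_finset_isCover_sphere (E := EuclideanSpace ℝ (Fin n)) (ε := 1 / 2) (by norm_num)
  set good := {ω | ∀ u ∈ N, ∑ i, (Real.sqrt n * ⟪A ω i, u⟫) ^ 2 < R ^ 2 * m}
  have hbad : μ.real goodᶜ ≤ Real.exp (-m) := by
    have hR2 : R ^ 2 = (K + 1) ^ 2 * (1 + Real.log 10) := by
      rw [mul_pow, Real.sq_sqrt (by positivity)]
    convert hA.measureReal_exists_sum_sq_inner_ge_le_exp_neg hK.le hnm
      (fun u hu => by simpa using hNsphere hu) (by norm_num at hNcard; simpa using hNcard)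
      using 3
    ext
    simp [good, hR2, mul_assoc]
  have hgood : ∀ ω ∈ good, ∀ x : EuclideanSpace ℝ (Fin n),
      (#{i | ¬ |⟪A ω i, x⟫ - ⟪A ω i, xstar⟫| ≤ 2 * R / (α * Real.sqrt n) * ‖x - xstar‖} : ℝ)
        ≤ α * m := by
    intro ω hω x
    simp only [← inner_sub_right]
    refine (card_filter_not_abs_inner_le_le_of_isCover (A ω) hNcover (by positivity) hR
      (fun u hu => by simpa using (hω u hu).le) hα0 (x - xstar)).trans ?_
    rw [Fintype.card_fin]
    gcongr
    nlinarith
  calc ENNReal.ofReal (1 - 2 * Real.exp (-(m : ℝ)))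
      ≤ ENNReal.ofReal (1 - Real.exp (-m)) :=
        ENNReal.ofReal_le_ofReal (by linarith [Real.exp_pos (-(m : ℝ))])
    _ ≤ μ good := ofReal_one_sub_le_of_measureReal_compl_le hbad
    _ ≤ _ := measure_mono hgood
end
end

section
/- Let a_1, …, a_m ∈ ℝⁿ be unit vectors, b ∈ ℝ^m, x_k, x* ∈ ℝⁿ, and η ∈ ℝ. Let i be sampled uniformly from [m], let s_i(x_k) = sgn(⟨a_i, x_k⟩ − b_i), and set x_{k+1} = x_k − η·s_i(x_k)·a_i. Then E‖x_{k+1} − x*‖² = (η − η*(x_k))² − (η*(x_k))² + ‖x_k − x*‖², where η*(x_k) = (1/m)·Σ_{i=1}^m s_i(x_k)·⟨x_k − x*, a_i⟩. In particular, the expected squared error E‖x_{k+1} − x*‖² is minimized, over all step sizes η, at η = η*(x_k). -/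
/-! Since `sgn t ^ 2 = 1` and `‖aᵢ‖ = 1`, the step along `aᵢ` changes `‖x - x*‖²` by
`η² - 2η·sᵢ⟨x - x*, aᵢ⟩`. Averaging over `i` gives `η² - 2η·η* + ‖x - x*‖²`, and completing
the square shows it is minimal at `η = η*`. -/

open MeasureTheory ProbabilityTheory Finset
open scoped RealInnerProductSpace ENNReal NNReal BigOperators

noncomputable section

lemma sgn_sq (t : ℝ) : sgn t ^ 2 = 1 := by
  unfold sgn; split_ifs <;> norm_num

section UnitStep

variable {E : Type*} [NormedAddCommGroup E] [InnerProductSpace ℝ E]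

lemma norm_sub_smul_sub_sq_of_norm_eq_one {a : E} (ha : ‖a‖ = 1) (x y : E) (c : ℝ) :
    ‖(x - c • a) - y‖ ^ 2 = ‖x - y‖ ^ 2 - 2 * c * ⟪x - y, a⟫ + c ^ 2 := by
  rw [sub_right_comm, norm_sub_sq_real, real_inner_smul_right, norm_smul, mul_pow, ha,
    Real.norm_eq_abs, sq_abs]
  ring

lemma mean_norm_sub_smul_sub_sq {ι : Type*} [Fintype ι] [Nonempty ι] {a : ι → E}
    (ha : ∀ i, ‖a i‖ = 1) {s : ι → ℝ} (hs : ∀ i, s i ^ 2 = 1) (x y : E) (η : ℝ) :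
    (1 / Fintype.card ι : ℝ) * ∑ i, ‖(x - (η * s i) • a i) - y‖ ^ 2 =
      (η - (1 / Fintype.card ι : ℝ) * ∑ i, s i * ⟪x - y, a i⟫) ^ 2
        - ((1 / Fintype.card ι : ℝ) * ∑ i, s i * ⟪x - y, a i⟫) ^ 2 + ‖x - y‖ ^ 2 := by
  have hcard : (Fintype.card ι : ℝ) ≠ 0 := by positivity
  have hterm (i : ι) : ‖(x - (η * s i) • a i) - y‖ ^ 2 =
      ‖x - y‖ ^ 2 - 2 * η * (s i * ⟪x - y, a i⟫) + η ^ 2 := by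
    rw [norm_sub_smul_sub_sq_of_norm_eq_one (ha i), mul_pow, hs i]
    ring
  simp only [hterm, sum_add_distrib, sum_sub_distrib, sum_const, ← mul_sum, card_univ,
    nsmul_eq_mul]
  field_simp
  ring

end UnitStep

/-- one-step expected error identity for ℓ₁-SGD (derivation of OptSGD).
With `i` uniform on `[m]` and `x_{k+1} = x_k - η·sgn(⟨aᵢ,x_k⟩ - bᵢ)·aᵢ`, one has
`E‖x_{k+1} - x*‖² = (η - η*(x_k))² - η*(x_k)² + ‖x_k - x*‖²`; in particular the expected
squared error is minimized over `η` at `η = η*(x_k)`. -/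
theorem optSGD_step_identity {m n : ℕ} (hm : 0 < m)
    (a : Fin m → EuclideanSpace ℝ (Fin n)) (ha : ∀ i, ‖a i‖ = 1)
    (b : Fin m → ℝ) (xk xstar : EuclideanSpace ℝ (Fin n)) (η : ℝ) :
    ((1 : ℝ) / m) * ∑ i, ‖(xk - (η * sgn (⟪a i, xk⟫ - b i)) • a i) - xstar‖ ^ 2 =
        (η - etaStar a b xstar xk) ^ 2 - etaStar a b xstar xk ^ 2 + ‖xk - xstar‖ ^ 2 ∧
      ∀ η' : ℝ,
        ((1 : ℝ) / m) *
            ∑ i, ‖(xk - (etaStar a b xstar xk * sgn (⟪a i, xk⟫ - b i)) • a i) - xstar‖ ^ 2 ≤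
          ((1 : ℝ) / m) * ∑ i, ‖(xk - (η' * sgn (⟪a i, xk⟫ - b i)) • a i) - xstar‖ ^ 2 := by
  have : Nonempty (Fin m) := ⟨⟨0, hm⟩⟩
  have mean_sq_dist (η : ℝ) :
      ((1 : ℝ) / m) * ∑ i, ‖(xk - (η * sgn (⟪a i, xk⟫ - b i)) • a i) - xstar‖ ^ 2 =
        (η - etaStar a b xstar xk) ^ 2 - etaStar a b xstar xk ^ 2 + ‖xk - xstar‖ ^ 2 := by
    simpa only [Fintype.card_fin, etaStar] using
      mean_norm_sub_smul_sub_sq ha (fun i => sgn_sq (⟪a i, xk⟫ - b i)) xk xstar η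
  refine ⟨mean_sq_dist η, fun η' => ?_⟩
  rw [mean_sq_dist, mean_sq_dist]
  nlinarith [sq_nonneg (η' - etaStar a b xstar xk)]
end
end
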